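/- Let Λ be an ℝ-linear map on n×n complex matrices and Λ* a trace adjoint of Λ. Let ρ, σ be positive definite matrices such that Λ(ρ) and Λ(σ) are positive definite. If σ^{1/2}·(σ^{1/2}·ρ·σ^{1/2})^{-1/2}·σ^{1/2} = Λ*(Λ(σ)^{1/2}·(Λ(σ)^{1/2}·Λ(ρ)·Λ(σ)^{1/2})^{-1/2}·Λ(σ)^{1/2}), then F(ρ,σ) = F(Λ(ρ),Λ(σ)). -/

import Mathlib

/-
Write `X(ρ, σ) := σ^{1/2} (σ^{1/2} ρ σ^{1/2})^{-1/2} σ^{1/2}`. Cyclicity of the trace gives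
`tr(X(ρ, σ) ρ) = tr((σ^{1/2} ρ σ^{1/2})^{-1/2} · σ^{1/2} ρ σ^{1/2}) = F(ρ, σ)`, so the operator
equation `X(ρ, σ) = Λ*(X(Λρ, Λσ))` and the trace adjoint give
`F(ρ, σ) = tr(Λ*(X(Λρ, Λσ)) ρ) = tr(X(Λρ, Λσ) Λ(ρ)) = F(Λρ, Λσ)`.
-/

open Matrix
open scoped ComplexOrder

/-- The real power `A^t` of a Hermitian matrix, via the continuous functional calculus. -/
noncomputable def matPow {n : Type*} [Fintype n] [DecidableEq n]
    (A : Matrix n n ℂ) (t : ℝ) : Matrix n n ℂ :=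
  cfc (fun x : ℝ => x ^ t) A

/-- The fidelity `F(ρ,σ) = tr((σ^{1/2} ρ σ^{1/2})^{1/2})` of positive definite matrices. -/
noncomputable def fidelity {n : Type*} [Fintype n] [DecidableEq n]
    (ρ σ : Matrix n n ℂ) : ℝ :=
  ((matPow (matPow σ (1/2) * ρ * matPow σ (1/2)) (1/2)).trace).re

open scoped MatrixOrder

namespace Matrix.PosDef

variable {n : Type*} [Fintype n] [DecidableEq n] {A : Matrix n n ℂ}

lemma matPow (hA : A.PosDef) (t : ℝ) : (matPow A t).PosDef :=
  ((cfc_isStrictlyPositive_iff _ A (A.finite_real_spectrum.continuousOn _) hA.isHermitian).mpr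
    fun _ hx => Real.rpow_pos_of_pos (hA.isStrictlyPositive.spectrum_pos hx) t).posDef

lemma matPow_mul_self (hA : A.PosDef) (t : ℝ) :
    _root_.matPow A t * A = _root_.matPow A (t + 1) := by
  nth_rewrite 2 [← cfc_id' ℝ A]
  rw [_root_.matPow, _root_.matPow, ← cfc_mul _ _ A (A.finite_real_spectrum.continuousOn _)
    (A.finite_real_spectrum.continuousOn _)]
  refine cfc_congr fun x hx => ?_
  rw [Real.rpow_add (hA.isStrictlyPositive.spectrum_pos hx), Real.rpow_one]

lemma mul_mul_same {S : Matrix n n ℂ} (hA : A.PosDef) (hS : S.PosDef) :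
    (S * A * S).PosDef := by
  have := hA.conjTranspose_mul_mul_same (mulVec_injective_iff_isUnit.mpr hS.isUnit)
  rwa [hS.isHermitian.eq] at this

end Matrix.PosDef

lemma fidelity_eq_re_trace_mul {n : Type*} [Fintype n] [DecidableEq n] {ρ σ : Matrix n n ℂ}
    (hρ : ρ.PosDef) (hσ : σ.PosDef) :
    fidelity ρ σ = (matPow σ (1/2) * matPow (matPow σ (1/2) * ρ * matPow σ (1/2)) (-(1/2))
      * matPow σ (1/2) * ρ).trace.re := by
  rw [fidelity]
  set S := matPow σ (1/2)
  set M := S * ρ * S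
  have hM : M.PosDef := hρ.mul_mul_same (hσ.matPow _)
  rw [mul_assoc _ S ρ, trace_mul_comm, ← mul_assoc, trace_mul_comm, hM.matPow_mul_self]
  norm_num

theorem fidelity_dpi_saturation_of_operator_eq_general
    {n : Type*} [Fintype n] [DecidableEq n]
    (Λ Λstar : Matrix n n ℂ →ₗ[ℝ] Matrix n n ℂ)
    (hadj : ∀ A B : Matrix n n ℂ, (Λstar A * B).trace = (A * Λ B).trace)
    (ρ σ : Matrix n n ℂ) (hρ : ρ.PosDef) (hσ : σ.PosDef)
    (hΛρ : (Λ ρ).PosDef) (hΛσ : (Λ σ).PosDef)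
    (hop : matPow σ (1/2) * matPow (matPow σ (1/2) * ρ * matPow σ (1/2)) (-(1/2)) * matPow σ (1/2)
      = Λstar (matPow (Λ σ) (1/2)
          * matPow (matPow (Λ σ) (1/2) * Λ ρ * matPow (Λ σ) (1/2)) (-(1/2))
          * matPow (Λ σ) (1/2))) :
    fidelity ρ σ = fidelity (Λ ρ) (Λ σ) := by
  rw [fidelity_eq_re_trace_mul hρ hσ, hop, hadj, fidelity_eq_re_trace_mul hΛρ hΛσ]

/-- The operator equation
`σ^{1/2}(σ^{1/2}ρσ^{1/2})^{-1/2}σ^{1/2} = Λ*(Λ(σ)^{1/2}(Λ(σ)^{1/2}Λ(ρ)Λ(σ)^{1/2})^{-1/2}Λ(σ)^{1/2})`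
implies saturation of the data processing inequality for the fidelity. -/
theorem fidelity_dpi_saturation_of_operator_eq
    {n : Type*} [Fintype n] [DecidableEq n] [Nonempty n]
    (Λ Λstar : Matrix n n ℂ →ₗ[ℝ] Matrix n n ℂ)
    (hadj : ∀ A B : Matrix n n ℂ, (Λstar A * B).trace = (A * Λ B).trace)
    (ρ σ : Matrix n n ℂ) (hρ : ρ.PosDef) (hσ : σ.PosDef)
    (hΛρ : (Λ ρ).PosDef) (hΛσ : (Λ σ).PosDef)
    (hop : matPow σ (1/2) * matPow (matPow σ (1/2) * ρ * matPow σ (1/2)) (-(1/2)) * matPow σ (1/2)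
      = Λstar (matPow (Λ σ) (1/2)
          * matPow (matPow (Λ σ) (1/2) * Λ ρ * matPow (Λ σ) (1/2)) (-(1/2))
          * matPow (Λ σ) (1/2))) :
    fidelity ρ σ = fidelity (Λ ρ) (Λ σ) :=
  fidelity_dpi_saturation_of_operator_eq_general Λ Λstar hadj ρ σ hρ hσ hΛρ hΛσ hop
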